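/- arXiv:1710.08120 — 2 statements merged into one kernel-verified Lean document; each statement's English description precedes it below -/
import Mathlib

section
/- If a bivariate survivor function satisfies P(X(s) > x, X(s+h) > x) = L_h(x) x^{-1/η(h)} with L_h slowly varying and marginals unit Fréchet, then the coefficient χ̄(h) = lim_{u→1⁻} [2 log P(F(X(s)) > u) / log P(F(X(s)) > u, F(X(s+h)) > u) - 1] equals 2η(h) - 1. -/
open MeasureTheory Filter Set Topology

/-! In the quantile scale `x = F⁻¹(u) = -1 / log u`, which tends to `∞` as `u → 1⁻`, the marginal
and joint exceedance probabilities are `1 - exp (-1 / x) ~ 1 / x` and `L x * x ^ (-1 / η)`. Their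
logarithms are therefore `-log x + o(log x)` and `-(1 / η) log x + o(log x)`, so their ratio tends
to `η`. The bound `log L x = o(log x)` is the uniform convergence theorem for slowly varying
functions, applied to `h y = log L (exp y)` via the Csiszár–Erdős measure argument: the shifts `t`
at which `h (x + t) - h x` is small eventually fill most of `[0, 2]`, so two such sets, one
translated by `u ∈ [0, 1]`, must meet. -/

section UniformConvergence

variable {h : ℝ → ℝ}

def stableShifts (h : ℝ → ℝ) (b : ℕ → ℝ) (ε : ℝ) (n : ℕ) : Set ℝ :=
  {t ∈ Icc (0 : ℝ) 2 | ∀ m ≥ n, |h (b m + t) - h (b m)| ≤ ε}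

lemma measurableSet_stableShifts (hm : Measurable h) (b : ℕ → ℝ) (ε : ℝ) (n : ℕ) :
    MeasurableSet (stableShifts h b ε n) := by
  refine measurableSet_Icc.inter (measurableSet_setOfPred.2 (.forall fun m => .forall fun _ => ?_))
  exact measurableSet_setOfPred.1
    (measurableSet_le ((hm.comp (measurable_const_add _)).sub_const _).abs measurable_const)

lemma monotone_stableShifts (h : ℝ → ℝ) (b : ℕ → ℝ) (ε : ℝ) :
    Monotone (stableShifts h b ε) :=
  fun _ _ hnn' _ ⟨ht, hle⟩ => ⟨ht, fun m hm => hle m (hnn'.trans hm)⟩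

lemma iUnion_stableShifts (hsv : ∀ c, Tendsto (fun x => h (x + c) - h x) atTop (𝓝 0))
    {b : ℕ → ℝ} (hb : Tendsto b atTop atTop) {ε : ℝ} (hε : 0 < ε) :
    ⋃ n, stableShifts h b ε n = Icc 0 2 := by
  refine Subset.antisymm (iUnion_subset fun _ => sep_subset _ _) fun t ht => ?_
  have hclose : ∀ᶠ x in atTop, |h (x + t) - h x| ≤ ε := by
    simpa [add_comm] using ((hsv t).abs.eventually (ge_mem_nhds (by simpa using hε)))
  obtain ⟨n, hn⟩ := eventually_atTop.mp (hb.eventually hclose)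
  exact mem_iUnion.mpr ⟨n, ht, hn⟩

lemma eventually_lt_volume_stableShifts
    (hsv : ∀ c, Tendsto (fun x => h (x + c) - h x) atTop (𝓝 0))
    {b : ℕ → ℝ} (hb : Tendsto b atTop atTop) {ε : ℝ} (hε : 0 < ε) :
    ∀ᶠ n in atTop, ENNReal.ofReal (3 / 2) < volume (stableShifts h b ε n) := by
  have hlim := tendsto_measure_iUnion_atTop (μ := volume) (monotone_stableShifts h b ε)
  rw [iUnion_stableShifts hsv hb hε, Real.volume_Icc] at hlim
  exact (tendsto_order.1 hlim).1 _ ((ENNReal.ofReal_lt_ofReal_iff (by norm_num)).2 (by norm_num))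

lemma eventually_abs_sub_le_of_tendsto (hm : Measurable h)
    (hsv : ∀ c, Tendsto (fun x => h (x + c) - h x) atTop (𝓝 0))
    {x u : ℕ → ℝ} (hx : Tendsto x atTop atTop) (hu : ∀ n, u n ∈ Icc (0 : ℝ) 1)
    {ε : ℝ} (hε : 0 < ε) :
    ∀ᶠ n in atTop, |h (x n + u n) - h (x n)| ≤ 2 * ε := by
  have hxu : Tendsto (fun n => x n + u n) atTop atTop :=
    hx.atTop_add_nonneg fun n => (hu n).1
  filter_upwards [eventually_lt_volume_stableShifts hsv hx hε,
    eventually_lt_volume_stableShifts hsv hxu hε] with n hA hB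
  have hvol : volume (Icc (0 : ℝ) 3) < volume (stableShifts h x ε n) +
      volume ((· + -u n) ⁻¹' stableShifts h (fun n => x n + u n) ε n) := by
    rw [measure_preimage_add_right, Real.volume_Icc]
    calc ENNReal.ofReal (3 - 0) = ENNReal.ofReal (3 / 2) + ENNReal.ofReal (3 / 2) := by
          rw [← ENNReal.ofReal_add (by norm_num) (by norm_num)]; norm_num
      _ < _ := ENNReal.add_lt_add hA hB
  obtain ⟨t, ⟨-, hxt⟩, -, hxut⟩ := nonempty_inter_of_measure_lt_add volume (u := Icc 0 3)
    ((measurableSet_stableShifts hm _ ε n).preimage (measurable_add_const _))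
    (fun t ht => ⟨ht.1.1, ht.1.2.trans (by norm_num)⟩)
    (fun t ht => ⟨by linarith [ht.1.1, (hu n).1], by linarith [ht.1.2, (hu n).2]⟩) hvol
  have h1 := hxt n le_rfl
  have h2 := hxut n le_rfl
  rw [show x n + u n + (t + -u n) = x n + t by ring, abs_sub_comm] at h2
  linarith [abs_sub_le (h (x n + u n)) (h (x n + t)) (h (x n))]

lemma eventually_forall_Icc_abs_sub_le (hm : Measurable h)
    (hsv : ∀ c, Tendsto (fun x => h (x + c) - h x) atTop (𝓝 0)) {ε : ℝ} (hε : 0 < ε) :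
    ∀ᶠ x in atTop, ∀ u ∈ Icc (0 : ℝ) 1, |h (x + u) - h x| ≤ ε := by
  by_contra hfreq
  obtain ⟨x, hxn, u, hu, hgt⟩ : ∃ x : ℕ → ℝ, (∀ n : ℕ, n ≤ x n) ∧ ∃ u : ℕ → ℝ,
      (∀ n, u n ∈ Icc (0 : ℝ) 1) ∧ ∀ n, ε < |h (x n + u n) - h (x n)| := by
    simp only [not_eventually, not_forall, not_le, exists_prop, frequently_atTop] at hfreq
    choose x hxn u hu hgt using fun n : ℕ => hfreq n
    exact ⟨x, hxn, u, hu, hgt⟩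
  have hx : Tendsto x atTop atTop := tendsto_atTop_mono hxn tendsto_natCast_atTop_atTop
  obtain ⟨n, hn⟩ := (eventually_abs_sub_le_of_tendsto hm hsv hx hu (half_pos hε)).exists
  linarith [hgt n]

lemma abs_sub_le_of_forall_Icc {X ε : ℝ}
    (hX : ∀ x ≥ X, ∀ u ∈ Icc (0 : ℝ) 1, |h (x + u) - h x| ≤ ε) {y : ℝ} (hy : X ≤ y) :
    |h y - h X| ≤ ε * (y - X + 1) := by
  have hε : 0 ≤ ε := (abs_nonneg _).trans (hX X le_rfl 0 ⟨le_rfl, zero_le_one⟩)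
  have hsteps : ∀ n : ℕ, ∀ u ∈ Icc (0 : ℝ) 1, |h (X + n + u) - h X| ≤ ε * (n + 1) := by
    intro n
    induction n with
    | zero => intro u hu; simpa using hX X le_rfl u hu
    | succ n ih =>
      intro u hu
      have hlast := hX (X + n + u) (by linarith [hu.1, n.cast_nonneg (α := ℝ)]) 1
        ⟨zero_le_one, le_rfl⟩
      rw [show X + n + u + 1 = X + (n + 1) + u by ring] at hlast
      rw [Nat.cast_succ]
      linarith [ih u hu, abs_sub_le (h (X + (n + 1) + u)) (h (X + n + u)) (h X)]
  have hfloor := Nat.floor_le (sub_nonneg.2 hy)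
  have hbound := hsteps ⌊y - X⌋₊ (y - X - ⌊y - X⌋₊)
    ⟨by linarith, by linarith [Nat.lt_floor_add_one (y - X)]⟩
  rw [show X + ⌊y - X⌋₊ + (y - X - ⌊y - X⌋₊) = y by ring] at hbound
  exact hbound.trans (mul_le_mul_of_nonneg_left (by linarith) hε)

lemma isLittleO_id_atTop_of_tendsto_add_sub (hm : Measurable h)
    (hsv : ∀ c, Tendsto (fun x => h (x + c) - h x) atTop (𝓝 0)) : h =o[atTop] id := by
  refine Asymptotics.IsLittleO.of_bound fun c hc => ?_
  obtain ⟨X, hX⟩ := eventually_atTop.1 (eventually_forall_Icc_abs_sub_le hm hsv (half_pos hc))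
  filter_upwards [eventually_ge_atTop X, eventually_ge_atTop 0,
    (tendsto_id.const_mul_atTop (half_pos hc)).eventually_ge_atTop (|h X| + c / 2 * (1 - X))]
    with y hyX hy0 hyc
  simp only [Real.norm_eq_abs, id_eq, abs_of_nonneg hy0] at hyc ⊢
  linarith [abs_sub_le_of_forall_Icc hX hyX, abs_sub_abs_le_abs_sub (h y) (h X)]

end UniformConvergence

def SlowlyVarying (L : ℝ → ℝ) : Prop :=
  ∀ t > (0 : ℝ), Tendsto (fun x => L (t * x) / L x) atTop (𝓝 1)

lemma SlowlyVarying.tendsto_log_div_log {L : ℝ → ℝ} (hL : SlowlyVarying L)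
    (hLmeas : Measurable L) (hLpos : ∀ᶠ x in atTop, 0 < L x) :
    Tendsto (fun x => Real.log (L x) / Real.log x) atTop (𝓝 0) := by
  set h : ℝ → ℝ := fun y => Real.log (L (Real.exp y)) with h_def
  have hsv : ∀ c, Tendsto (fun y => h (y + c) - h y) atTop (𝓝 0) := by
    intro c
    have hlim := ((hL _ (Real.exp_pos c)).comp Real.tendsto_exp_atTop).log one_ne_zero
    rw [Real.log_one] at hlim
    refine hlim.congr' ?_
    filter_upwards [Real.tendsto_exp_atTop.eventually hLpos,
      (Real.tendsto_exp_atTop.const_mul_atTop (Real.exp_pos c)).eventually hLpos] with y hy hcy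
    simp only [Function.comp_apply, h_def, Real.exp_add, mul_comm (Real.exp y)]
    exact Real.log_div hcy.ne' hy.ne'
  have hm : Measurable h := Real.measurable_log.comp (hLmeas.comp Real.measurable_exp)
  refine ((isLittleO_id_atTop_of_tendsto_add_sub hm hsv).tendsto_div_nhds_zero.comp
    Real.tendsto_log_atTop).congr' ?_
  filter_upwards [eventually_gt_atTop 0] with x hx
  simp only [Function.comp_apply, h_def, id, Real.exp_log hx]

lemma tendsto_mul_one_sub_exp_neg_one_div :
    Tendsto (fun x => x * (1 - Real.exp (-1 / x))) atTop (𝓝 1) := by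
  have hslope := (Real.hasDerivAt_exp 0).tendsto_slope_zero_left
  have hinv : Tendsto (fun x : ℝ => -1 / x) atTop (𝓝[<] 0) :=
    tendsto_nhdsWithin_iff.2 ⟨by simpa using tendsto_const_nhds.div_atTop tendsto_id,
      (eventually_gt_atTop 0).mono fun x hx => div_neg_of_neg_of_pos (by norm_num) hx⟩
  rw [Real.exp_zero] at hslope
  refine (hslope.comp hinv).congr' ((eventually_gt_atTop 0).mono fun x hx => ?_)
  simp only [Function.comp_apply, zero_add, smul_eq_mul]
  field_simp
  ring

lemma tendsto_log_one_sub_exp_neg_one_div_div_log :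
    Tendsto (fun x => Real.log (1 - Real.exp (-1 / x)) / Real.log x) atTop (𝓝 (-1)) := by
  have hlog := tendsto_mul_one_sub_exp_neg_one_div.log one_ne_zero
  rw [Real.log_one] at hlog
  have hlim := (hlog.div_atTop Real.tendsto_log_atTop).sub_const 1
  rw [zero_sub] at hlim
  refine hlim.congr' ((eventually_gt_atTop 1).mono fun x hx => ?_)
  have hexp : Real.exp (-1 / x) < 1 :=
    Real.exp_lt_one_iff.2 (div_neg_of_neg_of_pos (by norm_num) (by linarith))
  have hlogx : Real.log x ≠ 0 := (Real.log_pos hx).ne'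
  rw [Real.log_mul (zero_lt_one.trans hx).ne' (sub_pos.2 hexp).ne']
  field_simp
  ring

lemma tendsto_log_mul_rpow_div_log {L : ℝ → ℝ}
    (hL : Tendsto (fun x => Real.log (L x) / Real.log x) atTop (𝓝 0))
    (hLpos : ∀ᶠ x in atTop, 0 < L x) (a : ℝ) :
    Tendsto (fun x => Real.log (L x * x ^ a) / Real.log x) atTop (𝓝 a) := by
  have hlim := hL.add_const a
  rw [zero_add] at hlim
  refine hlim.congr' ?_
  filter_upwards [eventually_gt_atTop 1, hLpos] with x hx hLx
  have hlogx : Real.log x ≠ 0 := (Real.log_pos hx).ne'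
  rw [Real.log_mul hLx.ne' (Real.rpow_pos_of_pos (by linarith) a).ne', Real.log_rpow (by linarith)]
  field_simp

lemma tendsto_chibar_atTop {η : ℝ} (hη : 0 < η) {L : ℝ → ℝ} (hL : SlowlyVarying L)
    (hLmeas : Measurable L) (hLpos : ∀ᶠ x in atTop, 0 < L x) :
    Tendsto (fun x => 2 * Real.log (1 - Real.exp (-1 / x)) / Real.log (L x * x ^ (-(1 / η))) - 1)
      atTop (𝓝 (2 * η - 1)) := by
  have hlim := ((tendsto_log_one_sub_exp_neg_one_div_div_log.div
    (tendsto_log_mul_rpow_div_log (hL.tendsto_log_div_log hLmeas hLpos) hLpos (-(1 / η)))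
    (by simp [hη.ne'])).const_mul 2).sub_const 1
  rw [neg_div_neg_eq, one_div_one_div] at hlim
  refine hlim.congr' ((eventually_gt_atTop 1).mono fun x hx => ?_)
  simp only [Pi.div_apply, div_div_div_cancel_right₀ (Real.log_pos hx).ne', mul_div_assoc]

lemma lt_exp_neg_one_div_iff {u x : ℝ} (hu0 : 0 < u) (hu1 : u < 1) (hx : 0 < x) :
    u < Real.exp (-1 / x) ↔ -1 / Real.log u < x := by
  have hlog : Real.log u < 0 := Real.log_neg hu0 hu1
  rw [← Real.log_lt_iff_lt_exp hu0, lt_div_iff₀ hx, div_lt_iff_of_neg hlog, mul_comm]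

lemma tendsto_neg_one_div_log_nhdsLT_one :
    Tendsto (fun u => -1 / Real.log u) (𝓝[<] 1) atTop := by
  have hlog : Tendsto Real.log (𝓝[<] 1) (𝓝[<] 0) := by
    refine tendsto_nhdsWithin_iff.2 ⟨?_, ?_⟩
    · simpa using (Real.continuousAt_log one_ne_zero).tendsto.mono_left nhdsWithin_le_nhds
    · filter_upwards [Ioo_mem_nhdsLT zero_lt_one] with u hu using Real.log_neg hu.1 hu.2
  refine (tendsto_neg_atBot_atTop.comp (tendsto_inv_nhdsLT_zero.comp hlog)).congr fun u => ?_
  simp only [Function.comp_apply, neg_div, one_div]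

lemma toReal_measure_lt_eq_one_sub {Ω : Type*} [MeasurableSpace Ω] {μ : Measure Ω}
    [IsProbabilityMeasure μ] {X : Ω → ℝ} (hX : Measurable X) (x : ℝ) :
    (μ {ω | x < X ω}).toReal = 1 - (μ {ω | X ω ≤ x}).toReal := by
  have hcompl : {ω | x < X ω} = {ω | X ω ≤ x}ᶜ := by ext; simp
  rw [hcompl, prob_compl_eq_one_sub (measurableSet_le hX measurable_const),
    ENNReal.toReal_sub_of_le prob_le_one ENNReal.one_ne_top, ENNReal.toReal_one]

theorem chibar_eq_two_eta_sub_one_general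
    {Ω : Type*} [MeasurableSpace Ω] (μ : Measure Ω) [IsProbabilityMeasure μ]
    (η : ℝ) (hη : η ∈ Set.Ioc (0 : ℝ) 1)
    (X1 X2 : Ω → ℝ) (hX1 : Measurable X1)
    (hpos : ∀ ω, 0 < X1 ω ∧ 0 < X2 ω)
    (F : ℝ → ℝ) (hF : ∀ x, 0 < x → F x = Real.exp (-1 / x))
    (hmarg1 : ∀ x > (0 : ℝ), μ {ω | X1 ω ≤ x} = ENNReal.ofReal (Real.exp (-1 / x)))
    (L : ℝ → ℝ) (hLmeas : Measurable L) (hLpos : ∀ᶠ x in atTop, 0 < L x)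
    (hslow : ∀ t > (0 : ℝ), Tendsto (fun x => L (t * x) / L x) atTop (nhds 1))
    (hsurv : ∀ᶠ x in atTop,
      (μ {ω | x < X1 ω ∧ x < X2 ω}).toReal = L x * x ^ (-(1 / η))) :
    Tendsto (fun u : ℝ =>
        2 * Real.log ((μ {ω | u < F (X1 ω)}).toReal) /
            Real.log ((μ {ω | u < F (X1 ω) ∧ u < F (X2 ω)}).toReal) - 1)
      (nhdsWithin 1 (Set.Iio 1)) (nhds (2 * η - 1)) := by
  have hφ := tendsto_neg_one_div_log_nhdsLT_one
  refine ((tendsto_chibar_atTop hη.1 hslow hLmeas hLpos).comp hφ).congr' ?_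
  filter_upwards [Ioo_mem_nhdsLT zero_lt_one, hφ.eventually hsurv,
    hφ.eventually (eventually_gt_atTop 0)] with u ⟨hu0, hu1⟩ hsurv_u hx
  set x := -1 / Real.log u
  have hexp : Real.exp (-1 / x) = u := by
    rw [show -1 / x = Real.log u by simp [x], Real.exp_log hu0]
  have hevent : ∀ y > 0, u < F y ↔ x < y := fun y hy => by
    rw [hF y hy, lt_exp_neg_one_div_iff hu0 hu1 hy]
  have hmarg : {ω | u < F (X1 ω)} = {ω | x < X1 ω} := by
    ext ω; exact hevent _ (hpos ω).1
  have hjoint : {ω | u < F (X1 ω) ∧ u < F (X2 ω)} = {ω | x < X1 ω ∧ x < X2 ω} := by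
    ext ω; exact and_congr (hevent _ (hpos ω).1) (hevent _ (hpos ω).2)
  rw [Function.comp_apply, hmarg, hjoint, hsurv_u, toReal_measure_lt_eq_one_sub hX1,
    hmarg1 x hx, hexp, ENNReal.toReal_ofReal hu0.le]

/-- Ledford–Tawn model: if the bivariate survivor function satisfies
`P(X(s) > x, X(s+h) > x) = L_h(x) x^{-1/η}` with `L_h` slowly varying and unit
Fréchet margins, then `χ̄(h) = 2η - 1`. -/
theorem chibar_eq_two_eta_sub_one
    {Ω : Type*} [MeasurableSpace Ω] (μ : Measure Ω) [IsProbabilityMeasure μ]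
    (η : ℝ) (hη : η ∈ Set.Ioc (0 : ℝ) 1)
    (X1 X2 : Ω → ℝ) (hX1 : Measurable X1) (hX2 : Measurable X2)
    (hpos : ∀ ω, 0 < X1 ω ∧ 0 < X2 ω)
    (F : ℝ → ℝ) (hF : ∀ x, 0 < x → F x = Real.exp (-1 / x))
    (hmarg1 : ∀ x > (0 : ℝ), μ {ω | X1 ω ≤ x} = ENNReal.ofReal (Real.exp (-1 / x)))
    (hmarg2 : ∀ x > (0 : ℝ), μ {ω | X2 ω ≤ x} = ENNReal.ofReal (Real.exp (-1 / x)))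
    (L : ℝ → ℝ) (hLmeas : Measurable L) (hLpos : ∀ᶠ x in atTop, 0 < L x)
    (hslow : ∀ t > (0 : ℝ), Tendsto (fun x => L (t * x) / L x) atTop (nhds 1))
    (hsurv : ∀ᶠ x in atTop,
      (μ {ω | x < X1 ω ∧ x < X2 ω}).toReal = L x * x ^ (-(1 / η))) :
    Tendsto (fun u : ℝ =>
        2 * Real.log ((μ {ω | u < F (X1 ω)}).toReal) /
            Real.log ((μ {ω | u < F (X1 ω) ∧ u < F (X2 ω)}).toReal) - 1)
      (nhdsWithin 1 (Set.Iio 1)) (nhds (2 * η - 1)) :=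
  chibar_eq_two_eta_sub_one_general μ η hη X1 X2 hX1 hpos F hF hmarg1 L hLmeas hLpos hslow hsurv
end

section
/- Under the assumptions of the least-squares consistency theorem, if additionally the map ψ ↦ (ν(h,ψ))_{h∈H} is injective on Ψ, then ψ̂_N → ψ₀ almost surely as N → ∞. -/
/-!
Least-squares basic inequality: since `ψ̂_N` beats `ψ₀`, expanding the squares gives
`∑ₕ (ν(h,ψ₀) - ν(h,ψ̂_N))² ≤ 4 ∑ₕ (ε̄_{N,h})²` with `ε̄_{N,h}` the empirical mean of the errors,
which tends to `0` almost surely by the strong law of large numbers. The left-hand side is a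
continuous function of `ψ̂_N ∈ Ψ` that, by injectivity, vanishes only at `ψ₀`; on the compact
set `Ψ` outside any neighbourhood of `ψ₀` it is bounded below by a positive constant.
-/

open MeasureTheory Filter Topology Finset ProbabilityTheory

theorem tendsto_of_isCompact_of_tendsto_zero {α X : Type*} [TopologicalSpace X]
    {K : Set X} (hK : IsCompact K) {g : X → ℝ} (hg : ContinuousOn g K) {x₀ : X}
    (hpos : ∀ x ∈ K, x ≠ x₀ → 0 < g x) {l : Filter α} {u : α → X} (hu : ∀ n, u n ∈ K)
    (hgu : Tendsto (g ∘ u) l (𝓝 0)) : Tendsto u l (𝓝 x₀) := by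
  rw [tendsto_nhds]
  intro U hU hx₀U
  obtain ⟨m, hm, hgm⟩ := (hK.diff hU).exists_forall_le' (hg.mono Set.sdiff_subset)
    fun x hx => hpos x hx.1 fun h => hx.2 (h ▸ hx₀U)
  filter_upwards [hgu.eventually (eventually_lt_nhds hm)] with n hn
  by_contra hnU
  exact (hgm (u n) ⟨hu n, hnU⟩).not_gt hn

theorem sum_sq_sub_pos_of_ne {ι : Type*} [Fintype ι] {a b : ι → ℝ} (hab : a ≠ b) :
    0 < ∑ i, (a i - b i) ^ 2 := by
  obtain ⟨i, hi⟩ := Function.ne_iff.mp hab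
  exact sum_pos' (fun j _ => sq_nonneg _) ⟨i, mem_univ i, by positivity [sub_ne_zero.mpr hi]⟩

theorem sum_sq_le_four_mul_sum_sq_of_sum_nonpos {ι : Type*} (s : Finset ι) (a b : ι → ℝ)
    (h : ∑ i ∈ s, (a i ^ 2 + 2 * a i * b i) ≤ 0) :
    ∑ i ∈ s, a i ^ 2 ≤ 4 * ∑ i ∈ s, b i ^ 2 := by
  -- With `A = ∑ a²`, `B = ∑ a b`, `T = ∑ b²`: `0 ≤ A ≤ -2B` and Cauchy–Schwarz give `A² ≤ 4AT`.
  have hcs := sum_mul_sq_le_sq_mul_sq s a b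
  have ha : 0 ≤ ∑ i ∈ s, a i ^ 2 := sum_nonneg fun i _ => sq_nonneg _
  have hb : 0 ≤ ∑ i ∈ s, b i ^ 2 := sum_nonneg fun i _ => sq_nonneg _
  simp only [sum_add_distrib, mul_assoc, ← mul_sum] at h
  nlinarith

theorem strong_law_ae_real_pi {Ω ι : Type*} [MeasurableSpace Ω] {μ : Measure Ω} [Countable ι]
    {X : ℕ → Ω → ι → ℝ} (hindep : iIndepFun X μ)
    (hident : ∀ k, IdentDistrib (X k) (X 0) μ μ) (hint : ∀ i, Integrable (fun ω => X 0 ω i) μ) :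
    ∀ᵐ ω ∂μ, ∀ i, Tendsto (fun n : ℕ => (∑ k ∈ range n, X k ω i) / n) atTop
      (𝓝 (∫ ω, X 0 ω i ∂μ)) :=
  ae_all_iff.mpr fun i => strong_law_ae_real (fun k ω => X k ω i) (hint i)
    (fun _ _ hkl => (hindep.indepFun hkl).comp (measurable_pi_apply i) (measurable_pi_apply i))
    (fun k => (hident k).comp (measurable_pi_apply i))

section EmpiricalRisk

variable {ι : Type*} [Fintype ι]

/-- Least-squares criterion at the candidate value `b` of the regression function, for
observations `a h + e k h`, `k < N`, of the true value `a`. -/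
noncomputable def empiricalRisk (a : ι → ℝ) (e : ℕ → ι → ℝ) (N : ℕ) (b : ι → ℝ) : ℝ :=
  ∑ h, 1 / (N : ℝ) * ∑ k ∈ range N, ((a h + e k h) - b h) ^ 2

theorem empiricalRisk_sub_empiricalRisk_self (a : ι → ℝ) (e : ℕ → ι → ℝ) {N : ℕ} (hN : N ≠ 0)
    (b : ι → ℝ) :
    empiricalRisk a e N b - empiricalRisk a e N a =
      ∑ h, ((a h - b h) ^ 2 + 2 * (a h - b h) * ((∑ k ∈ range N, e k h) / N)) := by
  have hN' : (N : ℝ) ≠ 0 := Nat.cast_ne_zero.mpr hN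
  rw [empiricalRisk, empiricalRisk, ← sum_sub_distrib]
  refine sum_congr rfl fun h _ => ?_
  have hterm : ∀ k ∈ range N, ((a h + e k h) - b h) ^ 2 - ((a h + e k h) - a h) ^ 2
      = (a h - b h) ^ 2 + 2 * (a h - b h) * e k h := fun k _ => by ring
  rw [← mul_sub, ← sum_sub_distrib, sum_congr rfl hterm, sum_add_distrib, sum_const,
    card_range, ← mul_sum]
  field_simp
  ring

theorem sum_sq_sub_le_of_empiricalRisk_le (a : ι → ℝ) (e : ℕ → ι → ℝ) {N : ℕ} (hN : N ≠ 0)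
    {b : ι → ℝ} (hb : empiricalRisk a e N b ≤ empiricalRisk a e N a) :
    ∑ h, (a h - b h) ^ 2 ≤ 4 * ∑ h, ((∑ k ∈ range N, e k h) / N) ^ 2 := by
  refine sum_sq_le_four_mul_sum_sq_of_sum_nonpos _ _ _ ?_
  rw [← empiricalRisk_sub_empiricalRisk_self a e hN]
  exact sub_nonpos.mpr hb

end EmpiricalRisk

theorem least_squares_madogram_consistent_general
    {Ω : Type*} [MeasurableSpace Ω] (μ : Measure Ω)
    {ι : Type*} [Fintype ι] {d : ℕ}
    (Ψ : Set (Fin d → ℝ)) (hΨ : IsCompact Ψ)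
    (ψ₀ : Fin d → ℝ) (hψ₀ : ψ₀ ∈ Ψ)
    (ν : ι → (Fin d → ℝ) → ℝ) (hν : ∀ h, ContinuousOn (ν h) Ψ)
    (ε : ℕ → Ω → ι → ℝ)
    (hindep : ProbabilityTheory.iIndepFun ε μ)
    (hident : ∀ k, ProbabilityTheory.IdentDistrib (ε k) (ε 0) μ μ)
    (hint : ∀ h, Integrable (fun ω => ε 0 ω h) μ)
    (hmean : ∀ h, ∫ ω, ε 0 ω h ∂μ = 0)
    (L : ℕ → (Fin d → ℝ) → Ω → ℝ)
    (hL : ∀ N ψ ω, L N ψ ω =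
      ∑ h : ι, (1 / (N : ℝ)) *
        ∑ k ∈ Finset.range N, ((ν h ψ₀ + ε k ω h) - ν h ψ) ^ 2)
    (ψhat : ℕ → Ω → Fin d → ℝ)
    (hmin : ∀ N ω, ψhat N ω ∈ Ψ ∧ ∀ ψ ∈ Ψ, L N (ψhat N ω) ω ≤ L N ψ ω)
    (hinj : Set.InjOn (fun ψ => (fun h : ι => ν h ψ)) Ψ) :
    ∀ᵐ ω ∂μ, Tendsto (fun N => ψhat N ω) atTop (nhds ψ₀) := by
  filter_upwards [strong_law_ae_real_pi hindep hident hint] with ω hslln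
  simp only [hmean] at hslln
  have hmean_sq : Tendsto (fun N : ℕ => 4 * ∑ h, ((∑ k ∈ range N, ε k ω h) / N) ^ 2) atTop
      (𝓝 0) := by
    simpa using (tendsto_finsetSum univ fun h _ => (hslln h).pow 2).const_mul 4
  refine tendsto_of_isCompact_of_tendsto_zero hΨ
    (g := fun ψ => ∑ h, (ν h ψ₀ - ν h ψ) ^ 2)
    (continuousOn_finsetSum _ fun h _ => (continuousOn_const.sub (hν h)).pow 2)
    (fun ψ hψ hne => sum_sq_sub_pos_of_ne fun heq => hne (hinj hψ hψ₀ heq.symm))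
    (fun N => (hmin N ω).1) (squeeze_zero' ?_ ?_ hmean_sq)
  · exact Eventually.of_forall fun N => sum_nonneg fun h _ => sq_nonneg _
  · filter_upwards [eventually_ne_atTop 0] with N hN
    have hrisk := (hmin N ω).2 ψ₀ hψ₀
    rw [hL, hL] at hrisk
    exact sum_sq_sub_le_of_empiricalRisk_le (fun h => ν h ψ₀) (fun k h => ε k ω h) hN hrisk

/-- If moreover `ψ ↦ (ν(h,ψ))_{h∈H}` is injective on `Ψ`, then the
least-squares madogram estimator converges almost surely: `ψ̂_N → ψ₀`. -/
theorem least_squares_madogram_consistent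
    {Ω : Type*} [MeasurableSpace Ω] (μ : Measure Ω) [IsProbabilityMeasure μ]
    {ι : Type*} [Fintype ι] {d : ℕ}
    (Ψ : Set (Fin d → ℝ)) (hΨ : IsCompact Ψ)
    (ψ₀ : Fin d → ℝ) (hψ₀ : ψ₀ ∈ Ψ)
    (ν : ι → (Fin d → ℝ) → ℝ) (hν : ∀ h, ContinuousOn (ν h) Ψ)
    (ε : ℕ → Ω → ι → ℝ) (hεmeas : ∀ k, Measurable (ε k))
    (hindep : ProbabilityTheory.iIndepFun ε μ)
    (hident : ∀ k, ProbabilityTheory.IdentDistrib (ε k) (ε 0) μ μ)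
    (hint : ∀ h, Integrable (fun ω => ε 0 ω h) μ)
    (hmean : ∀ h, ∫ ω, ε 0 ω h ∂μ = 0)
    (hvar : ∀ h, Integrable (fun ω => (ε 0 ω h) ^ 2) μ)
    (L : ℕ → (Fin d → ℝ) → Ω → ℝ)
    (hL : ∀ N ψ ω, L N ψ ω =
      ∑ h : ι, (1 / (N : ℝ)) *
        ∑ k ∈ Finset.range N, ((ν h ψ₀ + ε k ω h) - ν h ψ) ^ 2)
    (ψhat : ℕ → Ω → Fin d → ℝ)
    (hmin : ∀ N ω, ψhat N ω ∈ Ψ ∧ ∀ ψ ∈ Ψ, L N (ψhat N ω) ω ≤ L N ψ ω)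
    (hinj : Set.InjOn (fun ψ => (fun h : ι => ν h ψ)) Ψ) :
    ∀ᵐ ω ∂μ, Tendsto (fun N => ψhat N ω) atTop (nhds ψ₀) :=
  least_squares_madogram_consistent_general μ Ψ hΨ ψ₀ hψ₀ ν hν ε hindep hident hint hmean L hL ψhat
    hmin hinj
end
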